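/- Let V : ℝ → ℝ be continuous concave on [0, ∞), and consider the Bellman operator (T V)(w) = max_{b ∈ [0, max(w − c, 0)]} [ U(G(w − b)) + e^{−δ} Σ_i q_i V(r_i + b) ], where U, G are continuous, increasing, concave, δ ≥ 0, c ≥ 0, r_i ≥ 0, q_i ≥ 0 with Σ q_i = 1. Then T V is nondecreasing in w, and if U, G have derivatives bounded by M_U, M_G respectively and V satisfies V(y) − V(x) ≤ M_U M_G (y − x) for x ≤ y, then T V also satisfies (T V)(y) − (T V)(x) ≤ M_U M_G (y − x) for x ≤ y. -/

import Mathlib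

/-!
Both claims come from comparing `T V` at two endowments `x ≤ y` through a single feasible
choice at `x`. For monotonicity, any bank `b` feasible at `x` is feasible at `y` and leaves more
to consume there. For the Lipschitz bound, take an optimal bank `b'` at `y` and bank
`b = min b' (max (x - c) 0)` at `x`: then `b ≤ b'` and `x - b ≤ y - b'`, so the gain in current
utility is at most `M_U M_G ((y - b') - (x - b))`, the gain in discounted continuation value is at
most `M_U M_G (b' - b)` (averaging with the weights `q_i` and discounting by `e^{-δ} ≤ 1` cannot
increase it), and the two add up to `M_U M_G (y - x)`.
-/

open Finset

lemma IsGreatest.sub_le_of_forall_exists {α : Type*} {f g : α → ℝ} {s t : Set α} {a b K : ℝ}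
    (ha : IsGreatest (f '' s) a) (hb : IsGreatest (g '' t) b)
    (h : ∀ y ∈ t, ∃ x ∈ s, g y - f x ≤ K) : b - a ≤ K := by
  obtain ⟨y, hy, rfl⟩ := hb.1
  obtain ⟨x, hx, hgf⟩ := h y hy
  have : f x ≤ a := ha.2 (Set.mem_image_of_mem f hx)
  linarith

lemma comp_sub_le_mul_sub {U G : ℝ → ℝ} {a b : ℝ} (ha : 0 ≤ a) (hGmono : Monotone G)
    (hU : ∀ s t, s ≤ t → U t - U s ≤ a * (t - s)) (hG : ∀ s t, s ≤ t → G t - G s ≤ b * (t - s))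
    {s t : ℝ} (hst : s ≤ t) : U (G t) - U (G s) ≤ a * b * (t - s) :=
  calc U (G t) - U (G s) ≤ a * (G t - G s) := hU _ _ (hGmono hst)
    _ ≤ a * (b * (t - s)) := mul_le_mul_of_nonneg_left (hG s t hst) ha
    _ = a * b * (t - s) := by ring

lemma weighted_sum_shift_sub_le {ι : Type*} [Fintype ι] {V : ℝ → ℝ} {K : ℝ}
    (hV : ∀ x y, x ≤ y → V y - V x ≤ K * (y - x)) (r q : ι → ℝ) (hq : ∀ i, 0 ≤ q i)
    (hq1 : ∑ i, q i = 1) {s t : ℝ} (hst : s ≤ t) :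
    ∑ i, q i * V (r i + t) - ∑ i, q i * V (r i + s) ≤ K * (t - s) :=
  calc ∑ i, q i * V (r i + t) - ∑ i, q i * V (r i + s)
      = ∑ i, q i * (V (r i + t) - V (r i + s)) := by
        rw [← sum_sub_distrib]; simp only [mul_sub]
    _ ≤ ∑ i, q i * (K * (t - s)) := by
        gcongr with i
        · exact hq i
        · simpa using hV (r i + s) (r i + t) (by linarith)
    _ = K * (t - s) := by rw [← sum_mul, hq1, one_mul]

lemma discounted_weighted_sum_shift_sub_le {ι : Type*} [Fintype ι] {V : ℝ → ℝ} {K β : ℝ}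
    (hV : ∀ x y, x ≤ y → V y - V x ≤ K * (y - x)) (hK : 0 ≤ K) (hβ0 : 0 ≤ β) (hβ1 : β ≤ 1)
    (r q : ι → ℝ) (hq : ∀ i, 0 ≤ q i) (hq1 : ∑ i, q i = 1) {s t : ℝ} (hst : s ≤ t) :
    β * ∑ i, q i * V (r i + t) - β * ∑ i, q i * V (r i + s) ≤ K * (t - s) :=
  calc β * ∑ i, q i * V (r i + t) - β * ∑ i, q i * V (r i + s)
      = β * (∑ i, q i * V (r i + t) - ∑ i, q i * V (r i + s)) := by ring
    _ ≤ β * (K * (t - s)) := by gcongr; exact weighted_sum_shift_sub_le hV r q hq hq1 hst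
    _ ≤ K * (t - s) := mul_le_of_le_one_left (mul_nonneg hK (sub_nonneg.2 hst)) hβ1

lemma Icc_max_sub_subset {c x y : ℝ} (hxy : x ≤ y) :
    Set.Icc 0 (max (x - c) 0) ⊆ Set.Icc 0 (max (y - c) 0) :=
  Set.Icc_subset_Icc_right (max_le_max_right 0 (by linarith))

lemma exists_mem_Icc_max_sub_le {c x y b' : ℝ} (hxy : x ≤ y)
    (hb' : b' ∈ Set.Icc 0 (max (y - c) 0)) :
    ∃ b ∈ Set.Icc 0 (max (x - c) 0), b ≤ b' ∧ x - b ≤ y - b' := by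
  refine ⟨min b' (max (x - c) 0), ⟨le_min hb'.1 (le_max_right _ _), min_le_right _ _⟩,
    min_le_left _ _, ?_⟩
  rcases le_total b' (max (x - c) 0) with h | h
  · rw [min_eq_left h]; linarith
  · rw [min_eq_right h]
    have hb'y : b' ≤ max (y - c) 0 := hb'.2
    rcases le_total (y - c) 0 with hy | hy
    · rw [max_eq_right hy] at hb'y; linarith [le_max_right (x - c) 0, hb'.1]
    · rw [max_eq_left hy] at hb'y; linarith [le_max_left (x - c) 0]

theorem stmt16_general {m : ℕ} (U G V : ℝ → ℝ)
    (hUmono : Monotone U) (hGmono : Monotone G)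
    (δ c : ℝ) (hδ : 0 ≤ δ)
    (r q : Fin m → ℝ) (hq : ∀ i, 0 ≤ q i)
    (hq1 : ∑ i, q i = 1)
    (TV : ℝ → ℝ)
    (hTV : ∀ w : ℝ, IsGreatest
      ((fun b => U (G (w - b)) + Real.exp (-δ) * ∑ i, q i * V (r i + b)) ''
        Set.Icc 0 (max (w - c) 0)) (TV w)) :
    Monotone TV ∧
    ∀ M_U M_G : ℝ,
      Differentiable ℝ U → Differentiable ℝ G →
      (∀ x, deriv U x ≤ M_U) → (∀ x, deriv G x ≤ M_G) →
      (∀ x y : ℝ, x ≤ y → V y - V x ≤ M_U * M_G * (y - x)) →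
      ∀ x y : ℝ, x ≤ y → TV y - TV x ≤ M_U * M_G * (y - x) := by
  refine ⟨fun x y hxy => ?_, fun M_U M_G hU hG hdU hdG hV x y hxy => ?_⟩
  · refine sub_nonpos.1 <| (hTV y).sub_le_of_forall_exists (hTV x) fun b hb =>
      ⟨b, Icc_max_sub_subset hxy hb, ?_⟩
    have : U (G (x - b)) ≤ U (G (y - b)) := hUmono (hGmono (by linarith))
    linarith
  · have hMU : 0 ≤ M_U := hUmono.deriv_nonneg.trans (hdU 0)
    have hMG : 0 ≤ M_G := hGmono.deriv_nonneg.trans (hdG 0)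
    refine (hTV x).sub_le_of_forall_exists (hTV y) fun b' hb' => ?_
    obtain ⟨b, hb, hbb', hxb⟩ := exists_mem_Icc_max_sub_le hxy hb'
    refine ⟨b, hb, ?_⟩
    have hcurrent := comp_sub_le_mul_sub hMU hGmono (image_sub_le_mul_sub_of_deriv_le hU hdU)
      (image_sub_le_mul_sub_of_deriv_le hG hdG) hxb
    have hfuture := discounted_weighted_sum_shift_sub_le hV (mul_nonneg hMU hMG)
      (Real.exp_pos (-δ)).le (Real.exp_le_one_iff.2 (by linarith)) r q hq hq1 hbb'
    linear_combination hcurrent + hfuture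

/-- the single-agent banking Bellman operator
`(T V) w = max_{b ∈ [0, max (w - c) 0]} [U (G (w - b)) + e^{-δ} Σ_i q_i V (r_i + b)]`
is monotone in `w`, and preserves the one-sided Lipschitz constant
`M_U * M_G` of the value function. -/
theorem stmt16 {m : ℕ} (U G V : ℝ → ℝ)
    (hUc : Continuous U) (hGc : Continuous G)
    (hUmono : Monotone U) (hGmono : Monotone G)
    (hUconc : ConcaveOn ℝ Set.univ U) (hGconc : ConcaveOn ℝ Set.univ G)
    (hVc : Continuous V) (hVconc : ConcaveOn ℝ (Set.Ici 0) V)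
    (δ c : ℝ) (hδ : 0 ≤ δ) (hc : 0 ≤ c)
    (r q : Fin m → ℝ) (hr : ∀ i, 0 ≤ r i) (hq : ∀ i, 0 ≤ q i)
    (hq1 : ∑ i, q i = 1)
    (TV : ℝ → ℝ)
    (hTV : ∀ w : ℝ, IsGreatest
      ((fun b => U (G (w - b)) + Real.exp (-δ) * ∑ i, q i * V (r i + b)) ''
        Set.Icc 0 (max (w - c) 0)) (TV w)) :
    Monotone TV ∧
    ∀ M_U M_G : ℝ,
      Differentiable ℝ U → Differentiable ℝ G →
      (∀ x, deriv U x ≤ M_U) → (∀ x, deriv G x ≤ M_G) →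
      (∀ x y : ℝ, x ≤ y → V y - V x ≤ M_U * M_G * (y - x)) →
      ∀ x y : ℝ, x ≤ y → TV y - TV x ≤ M_U * M_G * (y - x) :=
  stmt16_general U G V hUmono hGmono δ c hδ r q hq hq1 TV hTV
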